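/- Let 0 ≤ x ≤ y < 1. Then g_{1/2,1/2,1/2}(x,y) = 2·ln(4/(√(1−x) + √(1−y))). That is, ln(1/(1−x)) + 2 ln 2 + Σ_{k=1}^∞ (1/2)_k/(k·k!)·((y−x)/(1−x))^k = ln 16 − 2 ln(√(1−x) + √(1−y)). -/

import Mathlib

open Real MeasureTheory

/-- Rising factorial (Pochhammer symbol) `(a)_k`. -/
noncomputable def poch (a : ℝ) (k : ℕ) : ℝ := (ascPochhammer ℝ k).eval a

/-- Euler beta function `B(p,q) = Γ(p)Γ(q)/Γ(p+q)`. -/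
noncomputable def eulerBeta (p q : ℝ) : ℝ := Real.Gamma p * Real.Gamma q / Real.Gamma (p + q)

/-- Digamma function `ψ(x) = Γ'(x)/Γ(x)`. -/
noncomputable def psi (x : ℝ) : ℝ := deriv Real.Gamma x / Real.Gamma x

/-- General term of the double series for `B(a,b₁+b₂)·F₁(a;b₁,b₂;a+b₁+b₂;x,y)`. -/
noncomputable def F1term (a b1 b2 x y : ℝ) (p : ℕ × ℕ) : ℝ :=
  poch a (p.1 + p.2) * poch b1 p.1 * poch b2 p.2 * x ^ p.1 * y ^ p.2 /
    (poch (a + b1 + b2) (p.1 + p.2) * (Nat.factorial p.1 : ℝ) * (Nat.factorial p.2 : ℝ))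

/-- `f_{a,b₁,b₂}(x,y) = B(a,b₁+b₂)·F₁(a;b₁,b₂;a+b₁+b₂;x,y)` as a double series. -/
noncomputable def f (a b1 b2 x y : ℝ) : ℝ :=
  eulerBeta a (b1 + b2) * ∑' p : ℕ × ℕ, F1term a b1 b2 x y p

/-- The approximation `g_{a,b₁,b₂}(x,y)`. -/
noncomputable def g (a b1 b2 x y : ℝ) : ℝ :=
  Real.log (1 / (1 - x)) + 2 * psi 1 - psi a - psi (b1 + b2) +
    ∑' k : ℕ, poch b2 (k + 1) / ((k + 1 : ℝ) * poch (b1 + b2) (k + 1)) *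
      ((y - x) / (1 - x)) ^ (k + 1)

/-!
Put `t = (y - x) / (1 - x)` and `S(t) = ∑_{k ≥ 1} (1/2)_k tᵏ / (k · k!)`; the digamma values give
`2ψ(1) - ψ(1/2) - ψ(1) = 2 ln 2`. Differentiating termwise and using the binomial series
`(1 - t)^(-1/2) = ∑ (1/2)_k tᵏ / k!` gives `t S'(t) = (1 - t)^(-1/2) - 1`, which is also `t` times
the derivative of `2 ln 2 - 2 ln (1 + √(1 - t))`; both functions vanish at `0`, so they agree on
`(-1, 1)`. Finally `√(1 - x) (1 + √(1 - t)) = √(1 - x) + √(1 - y)`.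
-/

open scoped Nat

theorem poch_one (k : ℕ) : poch 1 k = k ! := ascPochhammer_eval_one ℝ k

theorem poch_succ (a : ℝ) (n : ℕ) : poch a (n + 1) = poch a n * (a + n) :=
  ascPochhammer_succ_eval n a

theorem poch_nonneg {a : ℝ} (ha : 0 ≤ a) (n : ℕ) : 0 ≤ poch a n := by
  induction n with
  | zero => simp [poch]
  | succ n ih => rw [poch_succ]; positivity

theorem poch_le_poch {a b : ℝ} (ha : 0 ≤ a) (hab : a ≤ b) (n : ℕ) : poch a n ≤ poch b n := by
  induction n with
  | zero => simp [poch]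
  | succ n ih =>
    rw [poch_succ, poch_succ]
    gcongr
    exact poch_nonneg (ha.trans hab) n

theorem abs_poch_div_factorial_le_one {a : ℝ} (ha : 0 ≤ a) (ha1 : a ≤ 1) (n : ℕ) :
    |poch a n / n !| ≤ 1 := by
  rw [abs_of_nonneg (by have := poch_nonneg ha n; positivity), div_le_one (by positivity),
    ← poch_one]
  exact poch_le_poch ha ha1 n

theorem ring_choose_eq_poch_div_factorial (a : ℝ) (n : ℕ) :
    Ring.choose (a + n - 1) n = poch a n / n ! := by
  rw [Ring.choose_eq_smul, Polynomial.descPochhammer_smeval_eq_ascPochhammer,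
    Polynomial.ascPochhammer_smeval_cast, Polynomial.ascPochhammer_smeval_eq_eval, poch,
    show a + n - 1 - n + 1 = a by ring, smul_eq_mul, div_eq_inv_mul]

theorem hasSum_poch_div_factorial_mul_pow (a : ℝ) {t : ℝ} (ht : |t| < 1) :
    HasSum (fun n ↦ poch a n / n ! * t ^ n) (1 / (1 - t) ^ a) := by
  have := (Real.one_div_one_sub_rpow_hasFPowerSeriesOnBall_zero a).hasSum
    (y := t) (by simpa [enorm_eq_nnnorm, ← NNReal.coe_lt_coe] using ht)
  simpa [FormalMultilinearSeries.ofScalars_apply_eq, ring_choose_eq_poch_div_factorial, mul_comm]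
    using this

theorem psi_one : psi 1 = -eulerMascheroniConstant := by
  rw [psi, Real.hasDerivAt_Gamma_one.deriv, Real.Gamma_one, div_one]

theorem psi_one_half : psi (1 / 2) = -eulerMascheroniConstant - 2 * log 2 := by
  rw [psi, Real.hasDerivAt_Gamma_one_half.deriv, Real.Gamma_one_half_eq]
  field_simp [(Real.sqrt_pos.2 Real.pi_pos).ne']
  ring

theorem hasDerivAt_tsum_div_succ_mul_pow_succ {c : ℕ → ℝ} {C : ℝ} (hc : ∀ n, |c n| ≤ C)
    {z : ℝ} (hz : |z| < 1) :
    HasDerivAt (fun w ↦ ∑' n, c n / (n + 1) * w ^ (n + 1)) (∑' n, c n * z ^ n) z := by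
  obtain ⟨r, hr, hr1⟩ := exists_between hz
  have hr0 : 0 ≤ r := (abs_nonneg z).trans hr.le
  have hu : Summable fun n ↦ C * r ^ n :=
    (summable_geometric_of_lt_one hr0 hr1).mul_left C
  refine hasDerivAt_tsum_of_isPreconnected (g := fun n w ↦ c n / (n + 1) * w ^ (n + 1))
    (g' := fun n w ↦ c n * w ^ n) (y₀ := 0) hu Metric.isOpen_ball
    (convex_ball 0 r).isPreconnected (fun n w _ ↦ ?_) (fun n w hw ↦ ?_)
    (Metric.mem_ball_self ((abs_nonneg z).trans_lt hr)) ?_ (by simpa using hr)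
  · refine ((hasDerivAt_pow (n + 1) w).const_mul (c n / (n + 1))).congr_deriv ?_
    rw [Nat.add_sub_cancel]
    push_cast
    field_simp
  · rw [mem_ball_zero_iff, Real.norm_eq_abs] at hw
    rw [norm_mul, norm_pow, Real.norm_eq_abs, Real.norm_eq_abs]
    gcongr
    · exact (abs_nonneg _).trans (hc 0)
    · exact hc n
  · simp

theorem hasDerivAt_log_one_add_sqrt_one_sub {z : ℝ} (hz : z < 1) :
    HasDerivAt (fun w ↦ log (1 + √(1 - w))) (-1 / (2 * √(1 - z) * (1 + √(1 - z)))) z := by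
  have hsqrt : 0 < √(1 - z) := Real.sqrt_pos.2 (by linarith)
  have := (((hasDerivAt_id' z).const_sub 1).sqrt (by simp; linarith)).const_add 1
  convert this.log (by positivity) using 1
  field_simp

theorem tsum_poch_half_succ_div_factorial_mul_pow {z : ℝ} (hz : |z| < 1) :
    ∑' n, poch (1 / 2) (n + 1) / (n + 1)! * z ^ n = 1 / (√(1 - z) * (1 + √(1 - z))) := by
  have hsqrt : 0 < √(1 - z) := Real.sqrt_pos.2 (by linarith [le_abs_self z])
  have hsq : √(1 - z) ^ 2 = 1 - z := Real.sq_sqrt (by linarith [le_abs_self z])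
  rcases eq_or_ne z 0 with rfl | hz0
  · rw [tsum_eq_single 0 fun n hn ↦ by simp [hn]]
    norm_num [poch]
  -- away from `0`, divide the tail `(1 - z)^(-1/2) - 1` of the binomial series by `z`
  have hA := hasSum_poch_div_factorial_mul_pow (1 / 2) hz
  rw [← Real.sqrt_eq_rpow, ← hasSum_nat_add_iff' 1] at hA
  have hB : HasSum (fun n ↦ poch (1 / 2) (n + 1) / (n + 1)! * z ^ n)
      ((1 / √(1 - z) - 1) / z) := by
    have hterm (n : ℕ) : poch (1 / 2) (n + 1) / (n + 1)! * z ^ n =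
        poch (1 / 2) (n + 1) / (n + 1)! * z ^ (n + 1) / z := by
      field_simp
      ring
    simp_rw [hterm]
    simpa [poch] using hA.div_const z
  rw [hB.tsum_eq]
  have hs1 : 1 - √(1 - z) ≠ 0 := fun h ↦ hz0 (by nlinarith)
  field_simp
  linear_combination -hsq

theorem tsum_poch_half_div_succ_mul_factorial_mul_pow {t : ℝ} (ht : |t| < 1) :
    ∑' k : ℕ, poch (1 / 2) (k + 1) / ((k + 1 : ℝ) * ((k + 1)! : ℝ)) * t ^ (k + 1) =
      2 * log 2 - 2 * log (1 + √(1 - t)) := by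
  set c : ℕ → ℝ := fun n ↦ poch (1 / 2) (n + 1) / (n + 1)!
  have hterm (k : ℕ) (w : ℝ) : poch (1 / 2) (k + 1) / ((k + 1 : ℝ) * ((k + 1)! : ℝ)) *
      w ^ (k + 1) = c k / (k + 1) * w ^ (k + 1) := by
    rw [div_div, mul_comm ((k : ℝ) + 1)]
  simp_rw [hterm]
  have hF : ∀ z ∈ Metric.ball (0 : ℝ) 1, HasDerivAt (fun w ↦ ∑' n, c n / (n + 1) * w ^ (n + 1))
      (1 / (√(1 - z) * (1 + √(1 - z)))) z := by
    intro z hz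
    rw [mem_ball_zero_iff, Real.norm_eq_abs] at hz
    rw [← tsum_poch_half_succ_div_factorial_mul_pow hz]
    exact hasDerivAt_tsum_div_succ_mul_pow_succ
      (fun n ↦ abs_poch_div_factorial_le_one (by norm_num) (by norm_num) (n + 1)) hz
  have hG : ∀ z ∈ Metric.ball (0 : ℝ) 1, HasDerivAt (fun w ↦ 2 * log 2 - 2 * log (1 + √(1 - w)))
      (1 / (√(1 - z) * (1 + √(1 - z)))) z := by
    intro z hz
    rw [mem_ball_zero_iff, Real.norm_eq_abs] at hz
    refine (((hasDerivAt_log_one_add_sqrt_one_sub (abs_lt.1 hz).2).const_mul 2).const_sub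
      (2 * log 2)).congr_deriv ?_
    field_simp
  refine Metric.isOpen_ball.eqOn_of_deriv_eq (convex_ball 0 1).isPreconnected
    (fun z hz ↦ (hF z hz).differentiableAt.differentiableWithinAt)
    (fun z hz ↦ (hG z hz).differentiableAt.differentiableWithinAt)
    (fun z hz ↦ (hF z hz).deriv.trans (hG z hz).deriv.symm)
    (Metric.mem_ball_self one_pos) ?_ (by simpa using ht)
  norm_num

theorem log_sqrt_one_sub_add_sqrt_one_sub {x y : ℝ} (hx : x < 1) :
    log (√(1 - x) + √(1 - y)) = log (1 - x) / 2 + log (1 + √(1 - (y - x) / (1 - x))) := by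
  have h1x : 0 < 1 - x := by linarith
  have hsplit : √(1 - x) + √(1 - y) = √(1 - x) * (1 + √(1 - (y - x) / (1 - x))) := by
    rw [mul_add, mul_one, ← Real.sqrt_mul h1x.le]
    congr 2
    field_simp
    ring
  rw [hsplit, Real.log_mul (by positivity) (by positivity), Real.log_sqrt h1x.le]

theorem g_carlson_gustafson_general (x y : ℝ) (hxy : x ≤ y) (hy1 : y < 1) :
    g (1/2) (1/2) (1/2) x y =
      2 * Real.log (4 / (Real.sqrt (1 - x) + Real.sqrt (1 - y))) ∧
    Real.log (1 / (1 - x)) + 2 * Real.log 2 +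
        ∑' k : ℕ, poch (1/2) (k + 1) / ((k + 1 : ℝ) * (Nat.factorial (k + 1) : ℝ)) *
          ((y - x) / (1 - x)) ^ (k + 1) =
      Real.log 16 - 2 * Real.log (Real.sqrt (1 - x) + Real.sqrt (1 - y)) := by
  have hx1 : x < 1 := hxy.trans_lt hy1
  have h1x : 0 < 1 - x := by linarith
  have ht : |(y - x) / (1 - x)| < 1 := by
    rw [abs_of_nonneg (div_nonneg (by linarith) h1x.le), div_lt_one h1x]
    linarith
  have hlog4 : log 4 = 2 * log 2 := by
    rw [show (4 : ℝ) = 2 ^ 2 by norm_num, Real.log_pow, Nat.cast_ofNat]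
  have hlog16 : log 16 = 4 * log 2 := by
    rw [show (16 : ℝ) = 2 ^ 4 by norm_num, Real.log_pow, Nat.cast_ofNat]
  have hseries : log (1 / (1 - x)) + 2 * log 2 +
      ∑' k : ℕ, poch (1/2) (k + 1) / ((k + 1 : ℝ) * (Nat.factorial (k + 1) : ℝ)) *
        ((y - x) / (1 - x)) ^ (k + 1) = log 16 - 2 * log (√(1 - x) + √(1 - y)) := by
    rw [tsum_poch_half_div_succ_mul_factorial_mul_pow ht, log_sqrt_one_sub_add_sqrt_one_sub hx1, one_div,
      Real.log_inv, hlog16]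
    ring
  refine ⟨?_, hseries⟩
  rw [g, show (1 / 2 + 1 / 2 : ℝ) = 1 by norm_num, psi_one, psi_one_half]
  simp_rw [poch_one]
  have hpos : 0 < √(1 - x) + √(1 - y) := by positivity
  rw [Real.log_div (by norm_num) hpos.ne', hlog4]
  linear_combination hseries + hlog16

/-- for `a = b₁ = b₂ = 1/2`, `g` is the Carlson–Gustafson approximation. -/
theorem g_carlson_gustafson (x y : ℝ) (hx0 : 0 ≤ x) (hxy : x ≤ y) (hy1 : y < 1) :
    g (1/2) (1/2) (1/2) x y =
      2 * Real.log (4 / (Real.sqrt (1 - x) + Real.sqrt (1 - y))) ∧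
    Real.log (1 / (1 - x)) + 2 * Real.log 2 +
        ∑' k : ℕ, poch (1/2) (k + 1) / ((k + 1 : ℝ) * (Nat.factorial (k + 1) : ℝ)) *
          ((y - x) / (1 - x)) ^ (k + 1) =
      Real.log 16 - 2 * Real.log (Real.sqrt (1 - x) + Real.sqrt (1 - y)) :=
  g_carlson_gustafson_general x y hxy hy1
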